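/- arXiv:1602.05805 — 2 statements merged into one kernel-verified Lean document; each statement's English description precedes it below -/
import Mathlib

section
/- Let u : D → ℂ be analytic. The multiplication operator M_{u'} : B → H^∞_{v_1}, f ↦ u'·f, is bounded if and only if sup_{z∈D} (1-|z|²)|u'(z)| log(e/(1-|z|²)) < ∞. -/
open Complex Metric Set Filter MeasureTheory Finset

noncomputable section

/-- The open unit disc in ℂ. -/
def D1 : Set ℂ := Metric.ball 0 1

/-- Analytic (holomorphic) on the open unit disc. -/
def AnalyticOnD (f : ℂ → ℂ) : Prop := DifferentiableOn ℂ f D1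

/-- Bloch seminorm. -/
def blochSemi (f : ℂ → ℂ) : ℝ := ⨆ z : D1, (1 - ‖(z : ℂ)‖ ^ 2) * ‖deriv f (z : ℂ)‖

/-- Bloch norm. -/
def blochNorm (f : ℂ → ℂ) : ℝ := ‖f 0‖ + blochSemi f

/-- Membership in the Bloch space. -/
def InBloch (f : ℂ → ℂ) : Prop :=
  AnalyticOnD f ∧ ∃ C, ∀ z ∈ D1, (1 - ‖z‖ ^ 2) * ‖deriv f z‖ ≤ C

/-- Sup norm over the unit disc. -/
def supNormD (f : ℂ → ℂ) : ℝ := ⨆ z : D1, ‖f (z : ℂ)‖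

/-- Weighted composition operator uC_φ. -/
def wco (u φ : ℂ → ℂ) (f : ℂ → ℂ) : ℂ → ℂ := fun z => u z * f (φ z)

/-- Multiplication operator M_u. -/
def mult (u : ℂ → ℂ) (f : ℂ → ℂ) : ℂ → ℂ := fun z => u z * f z

/-- The weight u_{(n)} = ∏_{j=0}^{n-1} u ∘ φ_j. -/
def wprod (u φ : ℂ → ℂ) (n : ℕ) : ℂ → ℂ := fun z => ∏ j ∈ Finset.range n, u (φ^[j] z)

/-- Boundedness of an operator on the Bloch space. -/
def BddOnBloch (T : (ℂ → ℂ) → (ℂ → ℂ)) : Prop :=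
  ∃ C, ∀ f, InBloch f → InBloch (T f) ∧ blochNorm (T f) ≤ C * blochNorm f

/-- Operator norm on the Bloch space. -/
def opNormB (T : (ℂ → ℂ) → (ℂ → ℂ)) : ℝ :=
  sInf {C : ℝ | 0 ≤ C ∧ ∀ f, InBloch f → blochNorm (T f) ≤ C * blochNorm f}

/-- Invertibility of an operator on the Bloch space (bounded two-sided inverse). -/
def InvertibleOnBloch (T : (ℂ → ℂ) → (ℂ → ℂ)) : Prop :=
  BddOnBloch T ∧ ∃ S, BddOnBloch S ∧
    ∀ f, InBloch f → Set.EqOn (S (T f)) f D1 ∧ Set.EqOn (T (S f)) f D1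

/-- Spectrum of an operator acting on the Bloch space. -/
def blochSpectrum (T : (ℂ → ℂ) → (ℂ → ℂ)) : Set ℂ :=
  {lam | ¬ InvertibleOnBloch (fun f z => lam * f z - T f z)}

/-- Automorphism of the unit disc (Möbius form). -/
def IsDiscAuto (φ : ℂ → ℂ) : Prop :=
  ∃ lam a : ℂ, ‖lam‖ = 1 ∧ a ∈ D1 ∧ ∀ z, φ z = lam * (a - z) / (1 - (starRingEnd ℂ) a * z)

/-- Hyperbolic distance on the unit disc. -/
def hypDist (z w : ℂ) : ℝ :=
  (1 / 2) * Real.log ((1 + ‖(z - w) / (1 - (starRingEnd ℂ) z * w)‖) /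
    (1 - ‖(z - w) / (1 - (starRingEnd ℂ) z * w)‖))

/-- The disc algebra A(𝔻). -/
def InDiscAlgebra (u : ℂ → ℂ) : Prop :=
  ContinuousOn u (Metric.closedBall 0 1) ∧ AnalyticOnD u

/-- u is bounded away from zero on the unit disc. -/
def BoundedAwayFromZero (u : ℂ → ℂ) : Prop := ∃ δ > 0, ∀ z ∈ D1, δ ≤ ‖u z‖

/-- Parabolic automorphism with unique fixed point a on the unit circle (φ'(a)=1). -/
def IsParabolicAuto (φ : ℂ → ℂ) (a : ℂ) : Prop :=
  IsDiscAuto φ ∧ ‖a‖ = 1 ∧ φ a = a ∧ deriv φ a = 1 ∧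
    ∀ w, ‖w‖ ≤ 1 → φ w = w → w = a

/-- Hyperbolic automorphism with attractive fixed point a and repulsive fixed point b. -/
def IsHyperbolicAuto (φ : ℂ → ℂ) (a b : ℂ) : Prop :=
  IsDiscAuto φ ∧ ‖a‖ = 1 ∧ ‖b‖ = 1 ∧ a ≠ b ∧ φ a = a ∧ φ b = b ∧
    ∃ μ : ℝ, 0 < μ ∧ μ < 1 ∧ deriv φ a = (μ : ℂ)

/-- Square of the Dirichlet norm (normalized area measure on 𝔻). -/
def dirichletNormSq (f : ℂ → ℂ) : ℝ :=
  ‖f 0‖ ^ 2 + (1 / Real.pi) * ∫ z in D1, ‖deriv f z‖ ^ 2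

/-- Dirichlet norm. -/
def dirichletNorm (f : ℂ → ℂ) : ℝ := Real.sqrt (dirichletNormSq f)

/-- Membership in the Dirichlet space. -/
def InDirichlet (f : ℂ → ℂ) : Prop :=
  AnalyticOnD f ∧ MeasureTheory.IntegrableOn (fun z => ‖deriv f z‖ ^ 2) D1

/-- Boundedness of an operator on the Dirichlet space. -/
def BddOnDirichlet (T : (ℂ → ℂ) → (ℂ → ℂ)) : Prop :=
  ∃ C, ∀ f, InDirichlet f → InDirichlet (T f) ∧ dirichletNorm (T f) ≤ C * dirichletNorm f

/-- Operator norm on the Dirichlet space. -/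
def opNormDir (T : (ℂ → ℂ) → (ℂ → ℂ)) : ℝ :=
  sInf {C : ℝ | 0 ≤ C ∧ ∀ f, InDirichlet f → dirichletNorm (T f) ≤ C * dirichletNorm f}

/-- Invertibility of an operator on the Dirichlet space. -/
def InvertibleOnDirichlet (T : (ℂ → ℂ) → (ℂ → ℂ)) : Prop :=
  BddOnDirichlet T ∧ ∃ S, BddOnDirichlet S ∧
    ∀ f, InDirichlet f → Set.EqOn (S (T f)) f D1 ∧ Set.EqOn (T (S f)) f D1

/-- Spectrum of an operator on the Dirichlet space. -/
def dirichletSpectrum (T : (ℂ → ℂ) → (ℂ → ℂ)) : Set ℂ :=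
  {lam | ¬ InvertibleOnDirichlet (fun f z => lam * f z - T f z)}

/-- Operator norm of M_{u'} : B → H^∞_{v₁}. -/
def opNormBtoHv1 (u : ℂ → ℂ) : ℝ :=
  sInf {C : ℝ | 0 ≤ C ∧ ∀ f, InBloch f → ∀ z ∈ D1,
    (1 - ‖z‖ ^ 2) * ‖deriv u z * f z‖ ≤ C * blochNorm f}

/-- Operator norm of M_{u'} : 𝒟 → A². -/
def opNormDtoA2 (u : ℂ → ℂ) : ℝ :=
  sInf {C : ℝ | 0 ≤ C ∧ ∀ f, InDirichlet f →
    Real.sqrt ((1 / Real.pi) * ∫ z in D1, ‖deriv u z * f z‖ ^ 2) ≤ C * dirichletNorm f}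

/-- The logarithmic weight log(e/(1-|z|²)). -/
def logWeight (z : ℂ) : ℝ := Real.log (Real.exp 1 / (1 - ‖z‖ ^ 2))

/-- Characterization of multipliers of the Bloch space: u ∈ H^∞ and the log condition. -/
def MultBChar (u : ℂ → ℂ) : Prop :=
  (∃ M, ∀ z ∈ D1, ‖u z‖ ≤ M) ∧
  (∃ M, ∀ z ∈ D1, (1 - ‖z‖ ^ 2) * ‖deriv u z‖ * logWeight z ≤ M)

/-
For a Bloch function, integrating `(1 - |ζ|²)|f'(ζ)| ≤ ‖f‖_B` along the radius `[0, z]` gives the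
growth bound `|f(z)| ≤ 2 ‖f‖_B log(e / (1 - |z|²))`, which makes the log condition sufficient.
It is also necessary because the bound is attained up to a constant: the functions
`f_w(z) = 1 - log(1 - w̄ z)` have Bloch norm at most `3` and `|f_w(w)| = log(e / (1 - |w|²))`.
-/

open ComplexConjugate

lemma mem_D1_iff {z : ℂ} : z ∈ D1 ↔ ‖z‖ < 1 := mem_ball_zero_iff

lemma one_sub_norm_sq_pos {z : ℂ} (hz : z ∈ D1) : 0 < 1 - ‖z‖ ^ 2 := by
  have := mem_D1_iff.mp hz
  nlinarith [norm_nonneg z]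

instance : Nonempty D1 := ⟨⟨0, by simp [D1]⟩⟩

lemma logWeight_eq {z : ℂ} (hz : z ∈ D1) : logWeight z = 1 - Real.log (1 - ‖z‖ ^ 2) := by
  rw [logWeight, Real.log_div (Real.exp_ne_zero 1) (one_sub_norm_sq_pos hz).ne', Real.log_exp]

lemma one_le_logWeight {z : ℂ} (hz : z ∈ D1) : 1 ≤ logWeight z := by
  have : Real.log (1 - ‖z‖ ^ 2) ≤ 0 :=
    Real.log_nonpos (one_sub_norm_sq_pos hz).le (by nlinarith [norm_nonneg z])
  rw [logWeight_eq hz]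
  linarith

lemma one_add_log_le_two_mul_logWeight {z : ℂ} (hz : z ∈ D1) :
    1 + Real.log (1 / (1 - ‖z‖)) ≤ 2 * logWeight z := by
  have hr := mem_D1_iff.mp hz
  have hpos := one_sub_norm_sq_pos hz
  -- `1 / (1 - r) = (1 + r) / (1 - r²) ≤ 2 / (1 - r²)` and `log 2 < 1`
  have hlog : Real.log (1 / (1 - ‖z‖)) ≤ Real.log (2 / (1 - ‖z‖ ^ 2)) := by
    refine Real.log_le_log (by have := sub_pos.2 hr; positivity) ?_
    rw [div_le_div_iff₀ (sub_pos.2 hr) hpos]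
    nlinarith [norm_nonneg z]
  rw [Real.log_div two_ne_zero hpos.ne'] at hlog
  linarith [Real.log_two_lt_d9, one_le_logWeight hz, logWeight_eq hz]

lemma blochSemi_nonneg (f : ℂ → ℂ) : 0 ≤ blochSemi f :=
  Real.iSup_nonneg fun z => mul_nonneg (one_sub_norm_sq_pos z.2).le (norm_nonneg _)

lemma blochNorm_nonneg (f : ℂ → ℂ) : 0 ≤ blochNorm f :=
  add_nonneg (norm_nonneg _) (blochSemi_nonneg f)

lemma blochSemi_le {f : ℂ → ℂ} {C : ℝ} (hC : ∀ z ∈ D1, (1 - ‖z‖ ^ 2) * ‖deriv f z‖ ≤ C) :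
    blochSemi f ≤ C :=
  ciSup_le fun z => hC z z.2

lemma InBloch.le_blochSemi {f : ℂ → ℂ} (hf : InBloch f) {z : ℂ} (hz : z ∈ D1) :
    (1 - ‖z‖ ^ 2) * ‖deriv f z‖ ≤ blochSemi f := by
  obtain ⟨-, C, hC⟩ := hf
  exact le_ciSup ⟨C, by rintro _ ⟨w, rfl⟩; exact hC w w.2⟩ (⟨z, hz⟩ : D1)

lemma norm_sub_le_of_weighted_deriv_le {f : ℂ → ℂ} (hf : DifferentiableOn ℂ f D1) {S : ℝ}
    (hS : ∀ w ∈ D1, (1 - ‖w‖ ^ 2) * ‖deriv f w‖ ≤ S) {z : ℂ} (hz : z ∈ D1) :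
    ‖f z - f 0‖ ≤ S * Real.log (1 / (1 - ‖z‖)) := by
  set r := ‖z‖
  have hr : r < 1 := mem_D1_iff.mp hz
  have hr0 : 0 ≤ r := norm_nonneg z
  have hpos : ∀ t ∈ Icc (0 : ℝ) 1, 0 < 1 - t * r := fun t ht => by nlinarith [ht.1, ht.2]
  have hnorm : ∀ t ∈ Icc (0 : ℝ) 1, ‖(t : ℂ) * z‖ = t * r := fun t ht => by
    rw [norm_mul, Complex.norm_real, Real.norm_of_nonneg ht.1]
  have hseg : ∀ t ∈ Icc (0 : ℝ) 1, (t : ℂ) * z ∈ D1 := fun t ht => by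
    rw [mem_D1_iff, hnorm t ht]
    nlinarith [ht.1, ht.2]
  have hderiv : ∀ t ∈ Icc (0 : ℝ) 1,
      HasDerivAt (fun t : ℝ => f (t * z) - f 0) (deriv f (t * z) * z) t := fun t ht => by
    have hf' := (hf.differentiableAt (isOpen_ball.mem_nhds (hseg t ht))).hasDerivAt
    have hline : HasDerivAt (fun t : ℝ => (t : ℂ) * z) z t := by
      simpa using Complex.ofRealCLM.hasDerivAt.mul_const z
    exact (hf'.comp t hline).sub_const (f 0)
  -- `t ↦ f(tz) - f(0)` is fenced by `t ↦ -S log(1 - t|z|)`, since `1 - t|z| ≤ 1 - |tz|²`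
  have hB : ∀ t ∈ Icc (0 : ℝ) 1,
      HasDerivAt (fun t : ℝ => -S * Real.log (1 - t * r)) (S * r / (1 - t * r)) t := fun t ht => by
    have hin : HasDerivAt (fun t : ℝ => 1 - t * r) (-r) t := by
      simpa using ((hasDerivAt_id t).mul_const r).const_sub 1
    exact (((Real.hasDerivAt_log (hpos t ht).ne').comp t hin).const_mul (-S)).congr_deriv
      (by ring)
  have hbound : ∀ t ∈ Icc (0 : ℝ) 1, ‖deriv f (t * z) * z‖ ≤ S * r / (1 - t * r) := fun t ht => by
    have h := hS _ (hseg t ht)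
    rw [hnorm t ht] at h
    have htr : t * r ≤ 1 := by nlinarith [ht.1, ht.2]
    have hle : (1 - t * r) * ‖deriv f (t * z)‖ ≤ S := by
      nlinarith [mul_nonneg (mul_nonneg (mul_nonneg ht.1 hr0) (sub_nonneg.2 htr))
        (norm_nonneg (deriv f (t * z)))]
    rw [norm_mul, le_div_iff₀ (hpos t ht)]
    nlinarith
  have hfence := image_norm_le_of_norm_deriv_right_le_deriv_boundary' (a := 0) (b := 1)
    (fun t ht => (hderiv t ht).continuousAt.continuousWithinAt)
    (fun t ht => (hderiv t (Ico_subset_Icc_self ht)).hasDerivWithinAt) (by simp)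
    (fun t ht => (hB t ht).continuousAt.continuousWithinAt)
    (fun t ht => (hB t (Ico_subset_Icc_self ht)).hasDerivWithinAt)
    (fun t ht => hbound t (Ico_subset_Icc_self ht)) (right_mem_Icc.2 zero_le_one)
  simpa [one_div, Real.log_inv] using hfence

lemma InBloch.norm_le_two_mul_blochNorm_mul_logWeight {f : ℂ → ℂ} (hf : InBloch f) {z : ℂ} (hz : z ∈ D1) :
    ‖f z‖ ≤ 2 * blochNorm f * logWeight z := by
  have hlog : 0 ≤ Real.log (1 / (1 - ‖z‖)) := by
    have hr := mem_D1_iff.mp hz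
    exact Real.log_nonneg (by rw [le_div_iff₀ (sub_pos.2 hr)]; linarith [norm_nonneg z])
  have hgrowth := norm_sub_le_of_weighted_deriv_le hf.1 (fun w hw => hf.le_blochSemi hw) hz
  calc ‖f z‖ ≤ ‖f 0‖ + ‖f z - f 0‖ := norm_le_norm_add_norm_sub' (f z) (f 0)
    _ ≤ ‖f 0‖ + blochSemi f * Real.log (1 / (1 - ‖z‖)) := by gcongr
    _ ≤ blochNorm f * (1 + Real.log (1 / (1 - ‖z‖))) := by
      rw [blochNorm]
      nlinarith [norm_nonneg (f 0), blochSemi_nonneg f]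
    _ ≤ blochNorm f * (2 * logWeight z) :=
      mul_le_mul_of_nonneg_left (one_add_log_le_two_mul_logWeight hz) (blochNorm_nonneg f)
    _ = 2 * blochNorm f * logWeight z := by ring

section LogKernel

def logKernel (w z : ℂ) : ℂ := 1 - Complex.log (1 - conj w * z)

variable {w z : ℂ}

lemma norm_conj_mul_lt_one (hw : w ∈ D1) (hz : z ∈ D1) : ‖conj w * z‖ < 1 := by
  rw [norm_mul, Complex.norm_conj]
  have := mem_D1_iff.mp hw
  have := mem_D1_iff.mp hz
  nlinarith [norm_nonneg w, norm_nonneg z]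

lemma hasDerivAt_logKernel (hw : w ∈ D1) (hz : z ∈ D1) :
    HasDerivAt (logKernel w) (conj w / (1 - conj w * z)) z := by
  have hslit : 1 - conj w * z ∈ slitPlane := by
    simpa [sub_eq_add_neg] using
      mem_slitPlane_of_norm_lt_one (by simpa only [norm_neg] using norm_conj_mul_lt_one hw hz)
  have hin : HasDerivAt (fun z => 1 - conj w * z) (-conj w) z := by
    simpa using ((hasDerivAt_id z).const_mul (conj w)).const_sub 1
  have h := ((Complex.hasDerivAt_log hslit).comp z hin).const_sub 1
  exact h.congr_deriv (by ring)

lemma weighted_deriv_logKernel_le (hw : w ∈ D1) (hz : z ∈ D1) :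
    (1 - ‖z‖ ^ 2) * ‖deriv (logKernel w) z‖ ≤ 2 := by
  have hw1 := mem_D1_iff.mp hw
  have hz1 := mem_D1_iff.mp hz
  have hden : 1 - ‖z‖ ≤ ‖1 - conj w * z‖ := by
    have h := norm_sub_norm_le (1 : ℂ) (conj w * z)
    rw [norm_one, norm_mul, Complex.norm_conj] at h
    nlinarith [norm_nonneg z]
  rw [(hasDerivAt_logKernel hw hz).deriv, norm_div, Complex.norm_conj]
  calc (1 - ‖z‖ ^ 2) * (‖w‖ / ‖1 - conj w * z‖)
      ≤ (1 - ‖z‖ ^ 2) * (1 / (1 - ‖z‖)) := by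
        have := (one_sub_norm_sq_pos hz).le
        gcongr
    _ = 1 + ‖z‖ := by
        field_simp [(sub_pos.2 hz1).ne']
        ring
    _ ≤ 2 := by linarith

lemma inBloch_logKernel (hw : w ∈ D1) : InBloch (logKernel w) :=
  ⟨fun _ hz => (hasDerivAt_logKernel hw hz).differentiableAt.differentiableWithinAt,
    2, fun _ hz => weighted_deriv_logKernel_le hw hz⟩

lemma blochNorm_logKernel_le (hw : w ∈ D1) : blochNorm (logKernel w) ≤ 3 := by
  have hsemi := blochSemi_le fun z hz => weighted_deriv_logKernel_le hw hz
  simp only [blochNorm, logKernel, mul_zero, sub_zero, Complex.log_one, norm_one]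
  linarith

lemma norm_logKernel_self (hw : w ∈ D1) : ‖logKernel w w‖ = logWeight w := by
  have hpos := one_sub_norm_sq_pos hw
  have hreal : 1 - conj w * w = ((1 - ‖w‖ ^ 2 : ℝ) : ℂ) := by
    rw [Complex.conj_mul']
    push_cast
    ring
  rw [logKernel, hreal, ← Complex.ofReal_log hpos.le, ← Complex.ofReal_one, ← Complex.ofReal_sub,
    Complex.norm_real, Real.norm_of_nonneg (by linarith [one_le_logWeight hw, logWeight_eq hw]),
    logWeight_eq hw]

end LogKernel

theorem stmt_2_general (u : ℂ → ℂ) :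
    (∃ C : ℝ, ∀ f, InBloch f → ∀ z ∈ D1,
        (1 - ‖z‖ ^ 2) * ‖deriv u z * f z‖ ≤ C * blochNorm f) ↔
      (∃ M : ℝ, ∀ z ∈ D1, (1 - ‖z‖ ^ 2) * ‖deriv u z‖ * logWeight z ≤ M) := by
  constructor
  · rintro ⟨C, hC⟩
    refine ⟨3 * max C 0, fun w hw => ?_⟩
    have h := hC _ (inBloch_logKernel hw) w hw
    rw [norm_mul, norm_logKernel_self hw, ← mul_assoc] at h
    calc (1 - ‖w‖ ^ 2) * ‖deriv u w‖ * logWeight w ≤ C * blochNorm (logKernel w) := h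
      _ ≤ max C 0 * 3 := mul_le_mul (le_max_left C 0) (blochNorm_logKernel_le hw)
          (blochNorm_nonneg _) (le_max_right C 0)
      _ = 3 * max C 0 := mul_comm _ _
  · rintro ⟨M, hM⟩
    refine ⟨2 * max M 0, fun f hf z hz => ?_⟩
    have hweight : 0 ≤ (1 - ‖z‖ ^ 2) * ‖deriv u z‖ :=
      mul_nonneg (one_sub_norm_sq_pos hz).le (norm_nonneg _)
    calc (1 - ‖z‖ ^ 2) * ‖deriv u z * f z‖ = (1 - ‖z‖ ^ 2) * ‖deriv u z‖ * ‖f z‖ := by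
          rw [norm_mul, mul_assoc]
      _ ≤ (1 - ‖z‖ ^ 2) * ‖deriv u z‖ * (2 * blochNorm f * logWeight z) := by
          gcongr
          exact hf.norm_le_two_mul_blochNorm_mul_logWeight hz
      _ = 2 * blochNorm f * ((1 - ‖z‖ ^ 2) * ‖deriv u z‖ * logWeight z) := by ring
      _ ≤ 2 * blochNorm f * max M 0 := by
          have := blochNorm_nonneg f
          gcongr
          exact (hM z hz).trans (le_max_left M 0)
      _ = 2 * max M 0 * blochNorm f := by ring

/-- M_{u'} : B → H^∞_{v₁} is bounded iff the log condition holds. -/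
theorem stmt_2 (u : ℂ → ℂ) (hu : AnalyticOnD u) :
    (∃ C : ℝ, ∀ f, InBloch f → ∀ z ∈ D1,
        (1 - ‖z‖ ^ 2) * ‖deriv u z * f z‖ ≤ C * blochNorm f) ↔
      (∃ M : ℝ, ∀ z ∈ D1, (1 - ‖z‖ ^ 2) * ‖deriv u z‖ * logWeight z ≤ M) :=
  stmt_2_general u
end
end

section
/- If φ is a finite Blaschke product of degree N, then for all z in the unit disc, (1-|φ(z)|²)/(1-|z|²) ≤ Σ_{j=1}^N (1+|a_j|)/(1-|a_j|), where a_1,…,a_N are the zeros of φ. -/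
open Complex Metric Set Filter MeasureTheory Finset

noncomputable section

/-!
Each Möbius factor `b_a(z) = (z - a)/(1 - ā z)` satisfies
`1 - |b_a(z)|² = (1 - |a|²)(1 - |z|²)/|1 - ā z|²`, and `|1 - ā z| ≥ 1 - |a|`, so
`1 - |b_a(z)|² ≤ (1 + |a|)/(1 - |a|) · (1 - |z|²)`. Since `|φ(z)|² = ∏ |b_{a_j}(z)|²` with all
factors in `[0, 1]`, the elementary bound `1 - ∏ tⱼ ≤ ∑ (1 - tⱼ)` gives the estimate.
-/

theorem Finset.one_sub_prod_le_sum_one_sub {ι R : Type*} [CommRing R] [PartialOrder R]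
    [IsOrderedRing R] (s : Finset ι) (t : ι → R) (h0 : ∀ i ∈ s, 0 ≤ t i)
    (h1 : ∀ i ∈ s, t i ≤ 1) :
    1 - ∏ i ∈ s, t i ≤ ∑ i ∈ s, (1 - t i) := by
  induction s using Finset.cons_induction with
  | empty => simp
  | cons i s _ ih =>
    rw [Finset.prod_cons, Finset.sum_cons]
    have hs0 : ∀ j ∈ s, 0 ≤ t j := fun j hj => h0 j (Finset.mem_cons_of_mem hj)
    have hs1 : ∀ j ∈ s, t j ≤ 1 := fun j hj => h1 j (Finset.mem_cons_of_mem hj)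
    have hti1 := h1 i (Finset.mem_cons_self i s)
    have hP : 0 ≤ 1 - ∏ j ∈ s, t j := sub_nonneg.2 (Finset.prod_le_one hs0 hs1)
    calc 1 - t i * ∏ j ∈ s, t j = (1 - t i) + t i * (1 - ∏ j ∈ s, t j) := by ring
      _ ≤ (1 - t i) + (1 - ∏ j ∈ s, t j) := by
        gcongr; exact mul_le_of_le_one_left hP hti1
      _ ≤ (1 - t i) + ∑ j ∈ s, (1 - t j) := by gcongr; exact ih hs0 hs1

namespace Complex

open ComplexConjugate

def blaschkeFactor (a z : ℂ) : ℂ := (z - a) / (1 - conj a * z)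

theorem one_sub_norm_le_norm_one_sub_conj_mul (a : ℂ) {z : ℂ} (hz : ‖z‖ ≤ 1) :
    1 - ‖a‖ ≤ ‖1 - conj a * z‖ := by
  have : ‖conj a * z‖ ≤ ‖a‖ := by
    rw [norm_mul, RCLike.norm_conj]; exact mul_le_of_le_one_right (norm_nonneg a) hz
  linarith [norm_sub_norm_le (1 : ℂ) (conj a * z), norm_one (α := ℂ)]

theorem one_sub_conj_mul_ne_zero {a z : ℂ} (ha : ‖a‖ < 1) (hz : ‖z‖ ≤ 1) :
    1 - conj a * z ≠ 0 :=
  norm_pos_iff.1 <| (sub_pos.2 ha).trans_le (one_sub_norm_le_norm_one_sub_conj_mul a hz)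

theorem one_sub_norm_blaschkeFactor_sq {a z : ℂ} (h : 1 - conj a * z ≠ 0) :
    1 - ‖blaschkeFactor a z‖ ^ 2 = (1 - ‖a‖ ^ 2) * (1 - ‖z‖ ^ 2) / ‖1 - conj a * z‖ ^ 2 := by
  have hpos : 0 < ‖1 - conj a * z‖ ^ 2 := by positivity
  rw [blaschkeFactor, norm_div, div_pow, eq_div_iff hpos.ne', sub_mul, one_mul,
    div_mul_cancel₀ _ hpos.ne']
  simp only [← normSq_eq_norm_sq, normSq_apply, sub_re, sub_im, one_re, one_im, mul_re,
    mul_im, conj_re, conj_im]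
  ring

theorem norm_blaschkeFactor_le_one {a z : ℂ} (ha : ‖a‖ < 1) (hz : ‖z‖ ≤ 1) :
    ‖blaschkeFactor a z‖ ≤ 1 := by
  have h := one_sub_norm_blaschkeFactor_sq (one_sub_conj_mul_ne_zero ha hz)
  have : 0 ≤ 1 - ‖blaschkeFactor a z‖ ^ 2 := by
    rw [h]
    have : 0 ≤ 1 - ‖a‖ ^ 2 := by nlinarith [norm_nonneg a]
    have : 0 ≤ 1 - ‖z‖ ^ 2 := by nlinarith [norm_nonneg z]
    positivity
  nlinarith [norm_nonneg (blaschkeFactor a z)]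

theorem one_sub_norm_blaschkeFactor_sq_le {a z : ℂ} (ha : ‖a‖ < 1) (hz : ‖z‖ ≤ 1) :
    1 - ‖blaschkeFactor a z‖ ^ 2 ≤ (1 + ‖a‖) / (1 - ‖a‖) * (1 - ‖z‖ ^ 2) := by
  have hgap : 0 < 1 - ‖a‖ := sub_pos.2 ha
  have hz2 : 0 ≤ 1 - ‖z‖ ^ 2 := by nlinarith [norm_nonneg z]
  have hden : (1 - ‖a‖) ^ 2 ≤ ‖1 - conj a * z‖ ^ 2 :=
    pow_le_pow_left₀ hgap.le (one_sub_norm_le_norm_one_sub_conj_mul a hz) 2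
  rw [one_sub_norm_blaschkeFactor_sq (one_sub_conj_mul_ne_zero ha hz)]
  calc (1 - ‖a‖ ^ 2) * (1 - ‖z‖ ^ 2) / ‖1 - conj a * z‖ ^ 2
      ≤ (1 - ‖a‖ ^ 2) * (1 - ‖z‖ ^ 2) / (1 - ‖a‖) ^ 2 := by
        gcongr
        exact mul_nonneg (by nlinarith [norm_nonneg a]) hz2
    _ = (1 + ‖a‖) / (1 - ‖a‖) * (1 - ‖z‖ ^ 2) := by
        field_simp
        ring

end Complex

/-- pointwise estimate for finite Blaschke products. -/
theorem stmt_5 (N : ℕ) (lam : ℂ) (a : Fin N → ℂ) (hlam : ‖lam‖ = 1)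
    (ha : ∀ j, a j ∈ D1) (φ : ℂ → ℂ)
    (hφ : ∀ z, φ z = lam * ∏ j, (z - a j) / (1 - (starRingEnd ℂ) (a j) * z)) :
    ∀ z ∈ D1, (1 - ‖φ z‖ ^ 2) / (1 - ‖z‖ ^ 2) ≤ ∑ j, (1 + ‖a j‖) / (1 - ‖a j‖) := by
  intro z hz
  have ha' : ∀ j, ‖a j‖ < 1 := fun j => mem_ball_zero_iff.1 (ha j)
  have hz' : ‖z‖ < 1 := mem_ball_zero_iff.1 hz
  have hz2 : 0 < 1 - ‖z‖ ^ 2 := by nlinarith [norm_nonneg z]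
  have hnorm : ‖φ z‖ ^ 2 = ∏ j, ‖blaschkeFactor (a j) z‖ ^ 2 := by
    rw [hφ z, norm_mul, hlam, one_mul, norm_prod, ← Finset.prod_pow]; rfl
  rw [div_le_iff₀ hz2, hnorm, Finset.sum_mul]
  calc 1 - ∏ j, ‖blaschkeFactor (a j) z‖ ^ 2
      ≤ ∑ j, (1 - ‖blaschkeFactor (a j) z‖ ^ 2) :=
        Finset.one_sub_prod_le_sum_one_sub _ _ (fun j _ => by positivity)
          (fun j _ => pow_le_one₀ (norm_nonneg _) (norm_blaschkeFactor_le_one (ha' j) hz'.le))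
    _ ≤ ∑ j, (1 + ‖a j‖) / (1 - ‖a j‖) * (1 - ‖z‖ ^ 2) :=
        Finset.sum_le_sum fun j _ => one_sub_norm_blaschkeFactor_sq_le (ha' j) hz'.le
end
end
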